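/- Let v > 0, r > 0, f ≥ 0 be real numbers with Δ ≥ (1+r)·√(1+f). Define the per-unit arbitrage loss Loss(δ) = 0 for δ ≤ f; Loss(δ) = ((1+r)/r)·((1+f) + (1+δ) − 2·√((1+δ)·(1+f))) for f < δ ≤ (1+f)·(1+r)² − 1; and Loss(δ) = (1+δ) − (1+f)·(1+r) for δ > (1+f)·(1+r)² − 1. Then v·∫₀^{Δ²−1} Loss(δ)·(1/(2Δ·√(1+δ))) dδ = 𝓐(f), where 𝓐(f) = v·((Δ − √(1+f)·(1+r))·(Δ² + Δ·√(1+f)·(1+r) + (1+f)·(r−2)·(r+1)) + (1+f)^{3/2}·r²·(r+1))/(3Δ). -/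

import Mathlib

/-!
Substituting `u = √(1 + δ)` turns the shock density into the uniform density `du / Δ` on
`[1, Δ]` and, with `s = √(1 + f)`, the loss into the piecewise polynomial `0`,
`(1 + r) / r * (u - s) ^ 2`, `u ^ 2 - s ^ 2 * (1 + r)` with breakpoints `s` and `s * (1 + r)`.
Integrating these three pieces gives the closed form.
-/

open Real Set MeasureTheory

noncomputable def arbitrageLoss (f r δ : ℝ) : ℝ :=
  if δ ≤ f then 0
  else if δ ≤ (1 + f) * (1 + r) ^ 2 - 1 then
    (1 + r) / r * ((1 + f) + (1 + δ) - 2 * √((1 + δ) * (1 + f)))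
  else (1 + δ) - (1 + f) * (1 + r)

noncomputable def arbitrageLossSqrt (s r u : ℝ) : ℝ :=
  if u ≤ s then 0
  else if u ≤ s * (1 + r) then (1 + r) / r * (u - s) ^ 2
  else u ^ 2 - s ^ 2 * (1 + r)

theorem arbitrageLoss_sq_sub_one {f r u : ℝ} (hf : -1 ≤ f) (hr : -1 ≤ r) (hu : 0 ≤ u) :
    arbitrageLoss f r (u ^ 2 - 1) = arbitrageLossSqrt (√(1 + f)) r u := by
  set s := √(1 + f)
  have hs : 0 ≤ s := sqrt_nonneg _
  have hs2 : s ^ 2 = 1 + f := sq_sqrt (by linarith)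
  have hlow : u ^ 2 - 1 ≤ f ↔ u ≤ s := by
    rw [sub_le_iff_le_add', ← hs2]
    exact pow_le_pow_iff_left₀ hu hs two_ne_zero
  have hhigh : u ^ 2 - 1 ≤ (1 + f) * (1 + r) ^ 2 - 1 ↔ u ≤ s * (1 + r) := by
    rw [sub_le_sub_iff_right, ← hs2, ← mul_pow]
    exact pow_le_pow_iff_left₀ hu (mul_nonneg hs (by linarith)) two_ne_zero
  have hroot : √((1 + (u ^ 2 - 1)) * (1 + f)) = u * s := by
    rw [add_sub_cancel, sqrt_mul (sq_nonneg u), sqrt_sq hu]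
  simp only [arbitrageLoss, arbitrageLossSqrt, hlow, hhigh, hroot]
  rw [← hs2]
  split_ifs <;> ring

theorem integral_mul_shockDensity (g : ℝ → ℝ) {Δ : ℝ} (hΔ : 1 ≤ Δ) :
    ∫ δ in (0 : ℝ)..(Δ ^ 2 - 1), g δ * (1 / (2 * Δ * √(1 + δ))) =
      (∫ u in (1 : ℝ)..Δ, g (u ^ 2 - 1)) / Δ := by
  have himage : (fun u : ℝ => u ^ 2 - 1) '' Icc 1 Δ = Icc 0 (Δ ^ 2 - 1) := by
    ext δ
    constructor
    · rintro ⟨u, ⟨hu1, huΔ⟩, rfl⟩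
      constructor <;> nlinarith
    · rintro ⟨hδ0, hδΔ⟩
      refine ⟨√(1 + δ), ⟨?_, ?_⟩, ?_⟩
      · exact one_le_sqrt.mpr (by linarith)
      · exact (sqrt_le_left (by linarith)).mpr (by linarith)
      · simp only
        rw [sq_sqrt (by linarith)]
        ring
  have hderiv : ∀ u ∈ Icc 1 Δ, HasDerivWithinAt (fun u : ℝ => u ^ 2 - 1) (2 * u) (Icc 1 Δ) u :=
    fun u _ => ((hasDerivAt_pow 2 u).sub_const 1).hasDerivWithinAt.congr_deriv (by ring)
  have hinj : InjOn (fun u : ℝ => u ^ 2 - 1) (Icc 1 Δ) := fun u hu w hw h => by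
    nlinarith [hu.1, hw.1]
  rw [intervalIntegral.integral_of_le (by nlinarith), intervalIntegral.integral_of_le hΔ,
    ← integral_Icc_eq_integral_Ioc, ← integral_Icc_eq_integral_Ioc, ← himage,
    integral_image_eq_integral_abs_deriv_smul measurableSet_Icc hderiv hinj, ← integral_div]
  refine setIntegral_congr_fun measurableSet_Icc fun u hu => ?_
  have hu : 0 < u := by linarith [hu.1]
  simp only [smul_eq_mul, add_sub_cancel, sqrt_sq hu.le, abs_of_pos (by positivity : 0 < 2 * u)]
  field_simp

theorem integral_arbitrageLossSqrt {s r Δ : ℝ} (hs : 1 ≤ s) (hr : 0 < r) (hΔ : s * (1 + r) ≤ Δ) :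
    ∫ u in (1 : ℝ)..Δ, arbitrageLossSqrt s r u =
      ((Δ - s * (1 + r)) * (Δ ^ 2 + Δ * s * (1 + r) + s ^ 2 * (r - 2) * (r + 1)) +
        s ^ 3 * r ^ 2 * (r + 1)) / 3 := by
  have hsm : s ≤ s * (1 + r) := by nlinarith
  have hzero : EqOn (fun _ => 0) (arbitrageLossSqrt s r) (Ioo 1 s) := fun u hu => by
    simp [arbitrageLossSqrt, hu.2.le]
  have hmid : EqOn (fun u => (1 + r) / r * (u - s) ^ 2) (arbitrageLossSqrt s r)
      (Ioo s (s * (1 + r))) := fun u hu => by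
    simp [arbitrageLossSqrt, not_le.mpr hu.1, hu.2.le]
  have htop : EqOn (fun u => u ^ 2 - s ^ 2 * (1 + r)) (arbitrageLossSqrt s r)
      (Ioo (s * (1 + r)) Δ) := fun u hu => by
    simp [arbitrageLossSqrt, not_le.mpr hu.1, not_le.mpr (hsm.trans_lt hu.1)]
  have hint_zero : IntervalIntegrable (arbitrageLossSqrt s r) volume 1 s :=
    intervalIntegrable_const.congr_uIoo (uIoo_of_le hs ▸ hzero)
  have hint_mid : IntervalIntegrable (arbitrageLossSqrt s r) volume s (s * (1 + r)) :=
    (by fun_prop : Continuous fun u => (1 + r) / r * (u - s) ^ 2).intervalIntegrable _ _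
      |>.congr_uIoo (uIoo_of_le hsm ▸ hmid)
  have hint_top : IntervalIntegrable (arbitrageLossSqrt s r) volume (s * (1 + r)) Δ :=
    (by fun_prop : Continuous fun u => u ^ 2 - s ^ 2 * (1 + r)).intervalIntegrable _ _
      |>.congr_uIoo (uIoo_of_le hΔ ▸ htop)
  rw [← intervalIntegral.integral_add_adjacent_intervals hint_zero (hint_mid.trans hint_top),
    ← intervalIntegral.integral_add_adjacent_intervals hint_mid hint_top,
    ← intervalIntegral.integral_congr_Ioo_of_le hs hzero,
    ← intervalIntegral.integral_congr_Ioo_of_le hsm hmid,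
    ← intervalIntegral.integral_congr_Ioo_of_le hΔ htop, intervalIntegral.integral_const_mul,
    intervalIntegral.integral_comp_sub_right (fun u => u ^ 2)]
  simp only [intervalIntegral.integral_zero, sub_self, integral_pow,
    intervalIntegral.integral_sub (intervalIntegral.intervalIntegrable_pow 2)
      intervalIntegrable_const, intervalIntegral.integral_const, smul_eq_mul]
  field_simp
  ring

theorem expected_adverse_selection
    (v r f Δ : ℝ) (hr : 0 < r) (hf : 0 ≤ f)
    (hΔ : (1 + r) * Real.sqrt (1 + f) ≤ Δ) :
    v * ∫ δ in (0 : ℝ)..(Δ ^ 2 - 1),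
        (if δ ≤ f then 0
          else if δ ≤ (1 + f) * (1 + r) ^ 2 - 1 then
            (1 + r) / r * ((1 + f) + (1 + δ) - 2 * Real.sqrt ((1 + δ) * (1 + f)))
          else (1 + δ) - (1 + f) * (1 + r)) * (1 / (2 * Δ * Real.sqrt (1 + δ))) =
      v * ((Δ - Real.sqrt (1 + f) * (1 + r)) *
            (Δ ^ 2 + Δ * Real.sqrt (1 + f) * (1 + r) + (1 + f) * (r - 2) * (r + 1)) +
          (1 + f) ^ ((3 : ℝ) / 2) * r ^ 2 * (r + 1)) / (3 * Δ) := by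
  set s := √(1 + f) with hs
  have hs1 : 1 ≤ s := one_le_sqrt.mpr (by linarith)
  have hsΔ : s * (1 + r) ≤ Δ := by linarith
  have hΔ1 : 1 ≤ Δ := by nlinarith
  have hloss : EqOn (fun u => arbitrageLoss f r (u ^ 2 - 1)) (arbitrageLossSqrt s r) (uIcc 1 Δ) :=
    fun u hu => arbitrageLoss_sq_sub_one (by linarith) (by linarith)
      (by linarith [(uIcc_of_le hΔ1 ▸ hu).1])
  have hpow : (1 + f) ^ ((3 : ℝ) / 2) = s ^ 3 := by
    rw [hs, sqrt_eq_rpow, ← rpow_natCast, ← rpow_mul (by linarith)]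
    norm_num
  calc _ = v * ((∫ u in (1 : ℝ)..Δ, arbitrageLoss f r (u ^ 2 - 1)) / Δ) :=
        congrArg (v * ·) (integral_mul_shockDensity (arbitrageLoss f r) hΔ1)
    _ = _ := by
      rw [intervalIntegral.integral_congr hloss, integral_arbitrageLossSqrt hs1 hr hsΔ, hpow,
        ← sq_sqrt (by linarith : 0 ≤ 1 + f), ← hs]
      field_simp
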